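/- arXiv:1902.01598 — 5 statements merged into one kernel-verified Lean document; each statement's English description precedes it below -/
import Mathlib

section
/- Let t0 < t1, let a : ℝ × [t0,t1] → ℝ be continuous, let p : ℝ × [t0,t1] → ℝ be continuously differentiable, and suppose the map x ↦ a(x,t)·p(x,t) is continuously differentiable in x with jointly continuous derivative ∂/∂x (a p). Let r₋, r₊ : [t0,t1] → ℝ be continuously differentiable characteristic curves satisfying r₋'(t) = a(r₋(t),t) and r₊'(t) = a(r₊(t),t) with r₋(t) ≤ r₊(t) for all t. Then ∫_{t0}^{t1} ( ∫_{r₋(t)}^{r₊(t)} [ ∂p/∂t (x,t) + ∂/∂x ( a(x,t) p(x,t) ) ] dx ) dt = ∫_{r₋(t1)}^{r₊(t1)} p(x,t1) dx − ∫_{r₋(t0)}^{r₊(t0)} p(x,t0) dx. -/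
open MeasureTheory intervalIntegral Set

open Filter Topology Function ContinuousLinearMap

/-!
The mass `∫ x in rm t..rp t, p x t` of the control volume is differentiated by the Leibniz rule,
giving `∫ ∂ₜp` plus the boundary terms `p (rp t) t * rp' t - p (rm t) t * rm' t`. Because the
boundaries are characteristics, `r' = a (r t) t`, so the boundary terms are `[a p]` evaluated
between `rm t` and `rp t`, which is `∫ ∂ₓ(a p)` by the fundamental theorem of calculus in `x`.
The claim is then the fundamental theorem of calculus in `t`.

The Leibniz rule with a moving upper limit is the chain rule applied to
`(w, s) ↦ ∫ x in c..w, P x s`, which is strictly differentiable because both partial derivatives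
are continuous. Data given only for `t ∈ [t0, t1]` are extended to all times by clamping `t`.
-/

section LeibnizRule

variable {P PT : ℝ → ℝ → ℝ}

theorem hasDerivAt_integral_param {α β t : ℝ} (hP : Continuous ↿P) (hPT : Continuous ↿PT)
    (hd : ∀ᶠ s in 𝓝 t, ∀ x, HasDerivAt (P x) (PT x s) s) :
    HasDerivAt (fun s => ∫ x in α..β, P x s) (∫ x in α..β, PT x t) t := by
  obtain ⟨δ, hδ, hball⟩ := Metric.eventually_nhds_iff_ball.1 hd
  obtain ⟨M, hM⟩ := (isCompact_uIcc.prod (isCompact_closedBall t δ)).exists_bound_of_continuousOn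
    hPT.continuousOn
  refine (hasDerivAt_integral_of_dominated_loc_of_deriv_le (F := fun s x => P x s)
    (F' := fun s x => PT x s) (bound := fun _ => M) (Metric.ball_mem_nhds t hδ)
    (.of_forall fun s => (hP.uncurry_right s).aestronglyMeasurable)
    ((hP.uncurry_right t).intervalIntegrable α β)
    (hPT.uncurry_right t).aestronglyMeasurable ?_ intervalIntegrable_const
    (.of_forall fun x _ s hs => hball s hs x)).2
  exact .of_forall fun x hx s hs =>
    hM (x, s) ⟨uIoc_subset_uIcc hx, Metric.ball_subset_closedBall hs⟩

theorem hasDerivAt_integral_param_upper {r : ℝ → ℝ} {c r' t : ℝ}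
    (hP : Continuous ↿P) (hPT : Continuous ↿PT)
    (hd : ∀ᶠ s in 𝓝 t, ∀ x, HasDerivAt (P x) (PT x s) s) (hr : HasDerivAt r r' t) :
    HasDerivAt (fun s => ∫ x in c..r s, P x s) (P (r t) t * r' + ∫ x in c..r t, PT x t) t := by
  have hPT_primitive : Continuous fun z : ℝ × ℝ => ∫ x in c..z.1, PT x z.2 :=
    (continuous_parametric_primitive_of_continuous (μ := volume) (a₀ := c)
      (f := fun s x => PT x s) (hPT.comp continuous_swap)).comp continuous_swap
  have hΦ : HasStrictFDerivAt (↿fun w s => ∫ x in c..w, P x s)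
      ((toSpanSingleton ℝ (P (r t) t)).coprod
        (toSpanSingleton ℝ (∫ x in c..r t, PT x t))) (r t, t) := by
    refine hasStrictFDerivAt_uncurry_coprod (u := (r t, t))
      (f₁ := fun w s => toSpanSingleton ℝ (P w s))
      (f₂ := fun w s => toSpanSingleton ℝ (∫ x in c..w, PT x s)) ?_ ?_ ?_ ?_
    · exact .of_forall fun v =>
        ((hP.uncurry_right v.2).integral_hasStrictDerivAt c v.1).hasDerivAt
    · have : ∀ᶠ v : ℝ × ℝ in 𝓝 (r t, t), ∀ᶠ s in 𝓝 v.2, ∀ x, HasDerivAt (P x) (PT x s) s :=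
        (continuous_snd.tendsto (r t, t)).eventually hd.eventually_nhds
      exact this.mono fun v hv => hasDerivAt_integral_param hP hPT hv
    · exact (toSpanSingletonCLE.continuous.comp hP).continuousAt
    · exact (toSpanSingletonCLE.continuous.comp hPT_primitive).continuousAt
  exact (hΦ.hasFDerivAt.comp_hasDerivAt (f := fun s => (r s, s)) t
    (hr.prodMk (hasDerivAt_id t))).congr_deriv (by simp [mul_comm])

theorem integral_param_bounds_eq_sub (hP : Continuous ↿P) (u v : ℝ → ℝ) :
    (fun s => ∫ x in u s..v s, P x s)
      = fun s => (∫ x in 0..v s, P x s) - ∫ x in 0..u s, P x s :=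
  funext fun s => (integral_interval_sub_left ((hP.uncurry_right s).intervalIntegrable _ _)
    ((hP.uncurry_right s).intervalIntegrable _ _)).symm

theorem continuous_integral_param_bounds (hP : Continuous ↿P) {u v : ℝ → ℝ}
    (hu : Continuous u) (hv : Continuous v) :
    Continuous fun s => ∫ x in u s..v s, P x s := by
  rw [integral_param_bounds_eq_sub hP]
  have hP' : Continuous ↿fun s x => P x s := hP.comp continuous_swap
  exact (continuous_parametric_intervalIntegral_of_continuous hP' hv).sub
    (continuous_parametric_intervalIntegral_of_continuous hP' hu)

theorem hasDerivAt_integral_param_bounds {u v : ℝ → ℝ} {u' v' t : ℝ}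
    (hP : Continuous ↿P) (hPT : Continuous ↿PT)
    (hd : ∀ᶠ s in 𝓝 t, ∀ x, HasDerivAt (P x) (PT x s) s)
    (hu : HasDerivAt u u' t) (hv : HasDerivAt v v' t) :
    HasDerivAt (fun s => ∫ x in u s..v s, P x s)
      (P (v t) t * v' - P (u t) t * u' + ∫ x in u t..v t, PT x t) t := by
  rw [integral_param_bounds_eq_sub hP]
  refine ((hasDerivAt_integral_param_upper (c := 0) hP hPT hd hv).sub
    (hasDerivAt_integral_param_upper hP hPT hd hu)).congr_deriv ?_
  rw [← integral_interval_sub_left ((hPT.uncurry_right t).intervalIntegrable 0 (v t))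
    ((hPT.uncurry_right t).intervalIntegrable 0 (u t))]
  ring

variable {a b : ℝ}

theorem ContinuousOn.continuous_uncurry_projIcc (h : a ≤ b)
    (hP : ContinuousOn ↿P (univ ×ˢ Icc a b)) :
    Continuous ↿fun x s => P x (projIcc a b h s) :=
  hP.comp_continuous (continuous_fst.prodMk
    (continuous_subtype_val.comp ((continuous_projIcc (h := h)).comp continuous_snd)))
    fun _ => ⟨mem_univ _, Subtype.prop _⟩

theorem continuousOn_integral_param_bounds_Icc (h : a ≤ b)
    (hP : ContinuousOn ↿P (univ ×ˢ Icc a b)) {u v : ℝ → ℝ}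
    (hu : ContinuousOn u (Icc a b)) (hv : ContinuousOn v (Icc a b)) :
    ContinuousOn (fun s => ∫ x in u s..v s, P x s) (Icc a b) := by
  have hproj : Continuous fun s => (projIcc a b h s : ℝ) :=
    continuous_subtype_val.comp continuous_projIcc
  have hclamp := continuous_integral_param_bounds (hP.continuous_uncurry_projIcc h)
    (hu.comp_continuous hproj fun s => Subtype.prop _)
    (hv.comp_continuous hproj fun s => Subtype.prop _)
  exact hclamp.continuousOn.congr fun s hs => by simp [projIcc_of_mem h hs]

theorem hasDerivAt_integral_param_bounds_of_mem_Ioo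
    (hP : ContinuousOn ↿P (univ ×ˢ Icc a b)) (hPT : ContinuousOn ↿PT (univ ×ˢ Icc a b))
    (hd : ∀ x, ∀ s ∈ Ioo a b, HasDerivAt (P x) (PT x s) s)
    {u v : ℝ → ℝ} {u' v' t : ℝ} (ht : t ∈ Ioo a b)
    (hu : HasDerivAt u u' t) (hv : HasDerivAt v v' t) :
    HasDerivAt (fun s => ∫ x in u s..v s, P x s)
      (P (v t) t * v' - P (u t) t * u' + ∫ x in u t..v t, PT x t) t := by
  have h : a ≤ b := (ht.1.trans ht.2).le
  have hclamp : ∀ s ∈ Ioo a b, ∀ᶠ τ in 𝓝 s, (projIcc a b h τ : ℝ) = τ := fun s hs =>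
    eventually_of_mem (Icc_mem_nhds hs.1 hs.2) fun τ hτ => by simp [projIcc_of_mem h hτ]
  have hdc : ∀ᶠ s in 𝓝 t, ∀ x,
      HasDerivAt (fun τ => P x (projIcc a b h τ)) (PT x (projIcc a b h s)) s := by
    filter_upwards [Ioo_mem_nhds ht.1 ht.2] with s hs x
    rw [(hclamp s hs).self_of_nhds]
    exact (hd x s hs).congr_of_eventuallyEq ((hclamp s hs).mono fun τ hτ => by simp only [hτ])
  have := hasDerivAt_integral_param_bounds (hP.continuous_uncurry_projIcc h)
    (hPT.continuous_uncurry_projIcc h) hdc hu hv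
  rw [(hclamp t ht).self_of_nhds] at this
  exact this.congr_of_eventuallyEq ((hclamp t ht).mono fun τ hτ => by simp only [hτ])

end LeibnizRule

theorem characteristic_control_volume_conservation_general
    (t0 t1 : ℝ) (ht : t0 < t1)
    (a : ℝ → ℝ → ℝ)
    (p pt : ℝ → ℝ → ℝ)
    (hpcont : ContinuousOn (fun q : ℝ × ℝ => p q.1 q.2) ((univ : Set ℝ) ×ˢ Icc t0 t1))
    (hpt : ∀ x : ℝ, ∀ t ∈ Icc t0 t1,
      HasDerivWithinAt (fun s => p x s) (pt x t) (Icc t0 t1) t)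
    (hptcont : ContinuousOn (fun q : ℝ × ℝ => pt q.1 q.2) ((univ : Set ℝ) ×ˢ Icc t0 t1))
    (q : ℝ → ℝ → ℝ)
    (hq : ∀ t ∈ Icc t0 t1, ∀ x : ℝ, HasDerivAt (fun y => a y t * p y t) (q x t) x)
    (hqcont : ContinuousOn (fun z : ℝ × ℝ => q z.1 z.2) ((univ : Set ℝ) ×ˢ Icc t0 t1))
    (rm rp : ℝ → ℝ)
    (hrm : ∀ t ∈ Icc t0 t1, HasDerivWithinAt rm (a (rm t) t) (Icc t0 t1) t)
    (hrp : ∀ t ∈ Icc t0 t1, HasDerivWithinAt rp (a (rp t) t) (Icc t0 t1) t) :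
    ∫ t in t0..t1, (∫ x in (rm t)..(rp t), pt x t + q x t)
      = (∫ x in (rm t1)..(rp t1), p x t1) - ∫ x in (rm t0)..(rp t0), p x t0 := by
  have hrm_cont : ContinuousOn rm (Icc t0 t1) := fun τ hτ => (hrm τ hτ).continuousWithinAt
  have hrp_cont : ContinuousOn rp (Icc t0 t1) := fun τ hτ => (hrp τ hτ).continuousWithinAt
  have hmass_deriv : ∀ t ∈ Ioo t0 t1, HasDerivAt (fun s => ∫ x in rm s..rp s, p x s)
      (∫ x in rm t..rp t, pt x t + q x t) t := by
    intro t ht'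
    have htI : t ∈ Icc t0 t1 := Ioo_subset_Icc_self ht'
    have hIcc : Icc t0 t1 ∈ 𝓝 t := Icc_mem_nhds ht'.1 ht'.2
    have hslice : ∀ {f : ℝ → ℝ → ℝ}, ContinuousOn ↿f (univ ×ˢ Icc t0 t1) →
        ∀ u v, IntervalIntegrable (f · t) volume u v := fun hf u v =>
      (hf.comp_continuous (continuous_id.prodMk continuous_const)
        fun _ => ⟨mem_univ _, htI⟩).intervalIntegrable u v
    refine (hasDerivAt_integral_param_bounds_of_mem_Ioo hpcont hptcont
      (fun x s hs => (hpt x s (Ioo_subset_Icc_self hs)).hasDerivAt (Icc_mem_nhds hs.1 hs.2))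
      ht' ((hrm t htI).hasDerivAt hIcc) ((hrp t htI).hasDerivAt hIcc)).congr_deriv ?_
    rw [integral_add (hslice hptcont _ _) (hslice hqcont _ _),
      integral_eq_sub_of_hasDerivAt (fun x _ => hq t htI x) (hslice hqcont _ _)]
    ring
  exact integral_eq_sub_of_hasDerivAt_of_le ht.le
    (continuousOn_integral_param_bounds_Icc ht.le hpcont hrm_cont hrp_cont) hmass_deriv
    ((continuousOn_integral_param_bounds_Icc ht.le (hptcont.add hqcont) hrm_cont hrp_cont
      ).intervalIntegrable_of_Icc ht.le)

/-- When the space-time boundaries of the control volume are characteristic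
curves, i.e. solutions of `dr/dt = a(r,t)`, the residual advection term
vanishes and the change of mass in the Lagrangian control volume is given
solely by the head and foot integrals. -/
theorem characteristic_control_volume_conservation
    (t0 t1 : ℝ) (ht : t0 < t1)
    (a : ℝ → ℝ → ℝ)
    (ha : ContinuousOn (fun q : ℝ × ℝ => a q.1 q.2) ((univ : Set ℝ) ×ˢ Icc t0 t1))
    (p pt px : ℝ → ℝ → ℝ)
    (hpcont : ContinuousOn (fun q : ℝ × ℝ => p q.1 q.2) ((univ : Set ℝ) ×ˢ Icc t0 t1))
    (hpt : ∀ x : ℝ, ∀ t ∈ Icc t0 t1,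
      HasDerivWithinAt (fun s => p x s) (pt x t) (Icc t0 t1) t)
    (hptcont : ContinuousOn (fun q : ℝ × ℝ => pt q.1 q.2) ((univ : Set ℝ) ×ˢ Icc t0 t1))
    (hpx : ∀ t ∈ Icc t0 t1, ∀ x : ℝ, HasDerivAt (fun y => p y t) (px x t) x)
    (hpxcont : ContinuousOn (fun q : ℝ × ℝ => px q.1 q.2) ((univ : Set ℝ) ×ˢ Icc t0 t1))
    (q : ℝ → ℝ → ℝ)
    (hq : ∀ t ∈ Icc t0 t1, ∀ x : ℝ, HasDerivAt (fun y => a y t * p y t) (q x t) x)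
    (hqcont : ContinuousOn (fun z : ℝ × ℝ => q z.1 z.2) ((univ : Set ℝ) ×ˢ Icc t0 t1))
    (rm rp : ℝ → ℝ)
    (hrm : ∀ t ∈ Icc t0 t1, HasDerivWithinAt rm (a (rm t) t) (Icc t0 t1) t)
    (hrp : ∀ t ∈ Icc t0 t1, HasDerivWithinAt rp (a (rp t) t) (Icc t0 t1) t)
    (hle : ∀ t ∈ Icc t0 t1, rm t ≤ rp t) :
    ∫ t in t0..t1, (∫ x in (rm t)..(rp t), pt x t + q x t)
      = (∫ x in (rm t1)..(rp t1), p x t1) - ∫ x in (rm t0)..(rp t0), p x t0 :=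
  characteristic_control_volume_conservation_general t0 t1 ht a p pt hpcont hpt hptcont q hq hqcont
    rm rp hrm hrp
end

section
/- Let 0 < λ < 1, h > 0, and c ∈ ℝ with c − h ≥ 0. Define g : ℝ → ℝ by g(s) = 1/h for s ∈ (c−h, c), g(s) = −1/h for s ∈ (c, c+h), and g(s) = 0 otherwise. Then for every x ≥ c + h, (1/Γ(λ)) ∫_0^x (x−s)^{λ−1} g(s) ds = ( (x−c+h)^λ − 2 (x−c)^λ + (x−c−h)^λ ) / ( h · Γ(λ+1) ). -/
open MeasureTheory intervalIntegral Real

/-- The left fractional integral of order `λ` of the a.e. derivative of the hat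
function with peak at `c` and support `[c−h, c+h]`, evaluated at `x ≥ c + h`,
is a second difference. -/
theorem left_fractional_integral_of_hat_derivative
    (lam h c : ℝ) (hlam0 : 0 < lam) (hlam1 : lam < 1) (hh : 0 < h)
    (hc : 0 ≤ c - h)
    (g : ℝ → ℝ)
    (hg : ∀ s : ℝ, g s =
      if c - h < s ∧ s < c then 1 / h
      else if c < s ∧ s < c + h then -1 / h
      else 0)
    (x : ℝ) (hx : c + h ≤ x) :
    (1 / Real.Gamma lam) * ∫ s in (0:ℝ)..x, (x - s) ^ (lam - 1) * g s
      = ((x - c + h) ^ lam - 2 * (x - c) ^ lam + (x - c - h) ^ lam)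
        / (h * Real.Gamma (lam + 1)) := by
  have hΓ : 0 < Real.Gamma lam := Real.Gamma_pos_of_pos hlam0
  have hker : ∀ a b : ℝ, IntervalIntegrable (fun s => (x - s) ^ (lam - 1)) volume a b := by
    intro a b
    have := (intervalIntegrable_rpow' (a := x - a) (b := x - b) (r := lam - 1)
      (by linarith)).comp_sub_left x
    simpa using this
  have haec : ∀ d : ℝ, ∀ᵐ s : ℝ, s ≠ d := fun d => ae_iff.2 (by simp)
  have key : ∀ a b : ℝ, ∫ s in a..b, (x - s) ^ (lam - 1)
      = ((x - a) ^ lam - (x - b) ^ lam) / lam := by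
    intro a b
    rw [intervalIntegral.integral_comp_sub_left (fun u => u ^ (lam - 1)) x,
      integral_rpow (Or.inl (by linarith))]
    simp [sub_add_cancel]
  set f : ℝ → ℝ := fun s => (x - s) ^ (lam - 1) * g s with hf
  have hcc : c - h < c := by linarith
  -- piece 1 : zero
  have h1 : ∫ s in (0:ℝ)..(c - h), f s = 0 := by
    rw [intervalIntegral.integral_congr (g := fun _ => (0:ℝ))]
    · simp
    · intro s hs
      rw [Set.uIcc_of_le hc] at hs
      have hs2 := hs.2
      simp only [hf, hg s]
      rw [if_neg (by push_neg; intro hlt; linarith), if_neg (by push_neg; intro hlt; linarith)]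
      ring
  -- piece 2
  have h2 : ∫ s in (c - h)..c, f s = (1 / h) * (((x - (c - h)) ^ lam - (x - c) ^ lam) / lam) := by
    rw [intervalIntegral.integral_congr_ae
      (g := fun s => (x - s) ^ (lam - 1) * (1 / h)) ?_]
    · rw [intervalIntegral.integral_mul_const, key (c - h) c]; ring
    · filter_upwards [haec c] with s hsne hs
      rw [Set.uIoc_of_le hcc.le] at hs
      have hsc : s < c := lt_of_le_of_ne hs.2 hsne
      simp only [hf, hg s]
      rw [if_pos ⟨hs.1, hsc⟩]
  -- piece 3
  have h3 : ∫ s in c..(c + h), f s = (-1 / h) * (((x - c) ^ lam - (x - (c + h)) ^ lam) / lam) := by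
    rw [intervalIntegral.integral_congr_ae
      (g := fun s => (x - s) ^ (lam - 1) * (-1 / h)) ?_]
    · rw [intervalIntegral.integral_mul_const, key c (c + h)]; ring
    · filter_upwards [haec (c + h)] with s hsne hs
      rw [Set.uIoc_of_le (by linarith : c ≤ c + h)] at hs
      have hsc : s < c + h := lt_of_le_of_ne hs.2 hsne
      simp only [hf, hg s]
      rw [if_neg (by push_neg; intro _; linarith [hs.1]), if_pos ⟨hs.1, hsc⟩]
  -- piece 4
  have h4 : ∫ s in (c + h)..x, f s = 0 := by
    rw [intervalIntegral.integral_congr (g := fun _ => (0:ℝ))]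
    · simp
    · intro s hs
      rw [Set.uIcc_of_le hx] at hs
      have hs1 := hs.1
      simp only [hf, hg s]
      rw [if_neg (by push_neg; intro _; linarith), if_neg (by push_neg; intro _; linarith)]
      ring
  -- integrability of f on each piece
  have hgm : Measurable g := by
    have hgeq : g = fun s => if c - h < s ∧ s < c then 1 / h
        else if c < s ∧ s < c + h then -1 / h else 0 := funext hg
    rw [hgeq]
    apply Measurable.ite
    · exact (measurableSet_Ioo (a := c - h) (b := c)).congr (by ext s; simp [Set.mem_Ioo])
    · exact measurable_const
    apply Measurable.ite
    · exact (measurableSet_Ioo (a := c) (b := c + h)).congr (by ext s; simp [Set.mem_Ioo])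
    · exact measurable_const
    · exact measurable_const
  have hbound : ∀ s : ℝ, |g s| ≤ 1 / h := by
    intro s
    rw [hg s]
    have h1h : 0 ≤ 1 / h := by positivity
    split_ifs
    · rw [abs_of_nonneg h1h]
    · rw [neg_div, abs_neg, abs_of_nonneg h1h]
    · simpa using h1h
  have hintf : ∀ a b : ℝ, IntervalIntegrable f volume a b := by
    intro a b
    apply IntervalIntegrable.mono_fun' (g := fun s => |(x - s) ^ (lam - 1)| * (1 / h))
    · exact (hker a b).norm.mul_const _
    · exact (hker a b).def'.aestronglyMeasurable.mul hgm.aestronglyMeasurable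
    · filter_upwards with s
      simp only [hf, norm_mul, Real.norm_eq_abs]
      exact mul_le_mul_of_nonneg_left (hbound s) (abs_nonneg _)
  -- split
  have hsplit : ∫ s in (0:ℝ)..x, f s
      = (∫ s in (0:ℝ)..(c - h), f s) + (∫ s in (c - h)..c, f s)
        + (∫ s in c..(c + h), f s) + (∫ s in (c + h)..x, f s) := by
    rw [intervalIntegral.integral_add_adjacent_intervals (hintf 0 (c - h)) (hintf (c - h) c),
      intervalIntegral.integral_add_adjacent_intervals (hintf 0 c) (hintf c (c + h)),
      intervalIntegral.integral_add_adjacent_intervals (hintf 0 (c + h)) (hintf (c + h) x)]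
  rw [show (∫ s in (0:ℝ)..x, (x - s) ^ (lam - 1) * g s) = ∫ s in (0:ℝ)..x, f s from rfl,
    hsplit, h1, h2, h3, h4, Real.Gamma_add_one hlam0.ne']
  have e1 : x - (c - h) = x - c + h := by ring
  have e2 : x - (c + h) = x - c - h := by ring
  rw [e1, e2]
  field_simp
  ring
end

section
/- With the stiffness matrix entries z_{i,j} defined via the weighted left and right fractional integrals of the hat-function derivatives, the diagonal entries satisfy, for every 1 ≤ i ≤ I−1, z_{i,i} = ( b · h^{λ−1} / Γ(λ+1) ) · ( 2^{−λ} + 2·(1/2)^λ − (3/2)^λ ); in particular the diagonal entries do not depend on γ. -/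
open MeasureTheory intervalIntegral Real

/-- Left fractional integral operator of order `lam` on `[0,1]`:
`(I_L^λ f)(x) = (1/Γ(λ)) ∫_0^x (x−s)^{λ−1} f(s) ds`. -/
noncomputable def leftFracInt (lam : ℝ) (f : ℝ → ℝ) (x : ℝ) : ℝ :=
  (1 / Real.Gamma lam) * ∫ s in (0:ℝ)..x, (x - s) ^ (lam - 1) * f s

/-- Right fractional integral operator of order `lam` on `[0,1]`:
`(I_R^λ f)(x) = (1/Γ(λ)) ∫_x^1 (s−x)^{λ−1} f(s) ds`. -/
noncomputable def rightFracInt (lam : ℝ) (f : ℝ → ℝ) (x : ℝ) : ℝ :=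
  (1 / Real.Gamma lam) * ∫ s in x..(1:ℝ), (s - x) ^ (lam - 1) * f s

/-- The a.e. derivative `Dφ_j` of the hat function `φ_j` on a uniform grid with
spacing `h`: it equals `1/h` on `(x_{j-1}, x_j)`, `−1/h` on `(x_j, x_{j+1})`,
and `0` elsewhere, where `x_k = k·h`. -/
noncomputable def hatDeriv (h : ℝ) (j : ℕ) (s : ℝ) : ℝ :=
  if ((j : ℝ) - 1) * h < s ∧ s < (j : ℝ) * h then 1 / h
  else if (j : ℝ) * h < s ∧ s < ((j : ℝ) + 1) * h then -1 / h
  else 0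

/-- The stiffness matrix entry
`z_{i,j} = b·[(γ I_L^λ + (1−γ) I_R^λ)(Dφ_j)(x_{i−1/2}) − (γ I_L^λ + (1−γ) I_R^λ)(Dφ_j)(x_{i+1/2})]`,
where `x_{i±1/2} = (i ± 1/2)·h` are the midpoints of the grid cells. -/
noncomputable def stiff (lam gam b h : ℝ) (i j : ℕ) : ℝ :=
  b * ((gam * leftFracInt lam (hatDeriv h j) (((i : ℝ) - 1 / 2) * h)
          + (1 - gam) * rightFracInt lam (hatDeriv h j) (((i : ℝ) - 1 / 2) * h))
        - (gam * leftFracInt lam (hatDeriv h j) (((i : ℝ) + 1 / 2) * h)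
          + (1 - gam) * rightFracInt lam (hatDeriv h j) (((i : ℝ) + 1 / 2) * h)))


lemma ae_ne' (b : ℝ) : ∀ᵐ (s : ℝ), s ≠ b := by
  rw [ae_iff]
  simpa using measure_singleton b

lemma pieceL_integrable (lam x a b c : ℝ) (f : ℝ → ℝ)
    (hlam : 0 < lam) (hab : a ≤ b) (hf : ∀ s ∈ Set.Ioo a b, f s = c) :
    IntervalIntegrable (fun s => (x - s) ^ (lam - 1) * f s) volume a b := by
  have hbase : IntervalIntegrable (fun s => (x - s) ^ (lam - 1)) volume a b := by
    have := (intervalIntegral.intervalIntegrable_rpow'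
      (show (-1:ℝ) < lam - 1 by linarith) (a := x - a) (b := x - b)).comp_sub_left x
    simpa using this
  rw [intervalIntegrable_iff] at hbase ⊢
  refine (hbase.mul_const c).congr ?_
  have h1 : ∀ᵐ s ∂(volume.restrict (Set.uIoc a b)), s ∈ Set.uIoc a b :=
    ae_restrict_mem measurableSet_uIoc
  have h2 : ∀ᵐ s ∂(volume.restrict (Set.uIoc a b)), s ≠ b :=
    ae_restrict_of_ae (ae_ne' b)
  filter_upwards [h1, h2] with s hs hsb
  rw [Set.uIoc_of_le hab] at hs
  rw [hf s ⟨hs.1, lt_of_le_of_ne hs.2 hsb⟩]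

lemma pieceL_eq (lam x a b c : ℝ) (f : ℝ → ℝ)
    (hlam : 0 < lam) (hab : a ≤ b) (hf : ∀ s ∈ Set.Ioo a b, f s = c) :
    (∫ s in a..b, (x - s) ^ (lam - 1) * f s)
      = c * ((x - a) ^ lam - (x - b) ^ lam) / lam := by
  have hae : ∀ᵐ s, s ∈ Set.uIoc a b → (x - s) ^ (lam - 1) * f s = (x - s) ^ (lam - 1) * c := by
    filter_upwards [ae_ne' b] with s hsb hs
    rw [Set.uIoc_of_le hab] at hs
    rw [hf s ⟨hs.1, lt_of_le_of_ne hs.2 hsb⟩]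
  rw [intervalIntegral.integral_congr_ae hae, intervalIntegral.integral_mul_const,
    intervalIntegral.integral_comp_sub_left (fun u => u ^ (lam - 1)) x,
    integral_rpow (Or.inl (by linarith))]
  rw [sub_add_cancel]
  ring

lemma pieceR_integrable (lam x a b c : ℝ) (f : ℝ → ℝ)
    (hlam : 0 < lam) (hab : a ≤ b) (hf : ∀ s ∈ Set.Ioo a b, f s = c) :
    IntervalIntegrable (fun s => (s - x) ^ (lam - 1) * f s) volume a b := by
  have hbase : IntervalIntegrable (fun s => (s - x) ^ (lam - 1)) volume a b := by
    have := (intervalIntegral.intervalIntegrable_rpow'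
      (show (-1:ℝ) < lam - 1 by linarith) (a := a - x) (b := b - x)).comp_sub_right x
    simpa using this
  rw [intervalIntegrable_iff] at hbase ⊢
  refine (hbase.mul_const c).congr ?_
  have h1 : ∀ᵐ s ∂(volume.restrict (Set.uIoc a b)), s ∈ Set.uIoc a b :=
    ae_restrict_mem measurableSet_uIoc
  have h2 : ∀ᵐ s ∂(volume.restrict (Set.uIoc a b)), s ≠ b :=
    ae_restrict_of_ae (ae_ne' b)
  filter_upwards [h1, h2] with s hs hsb
  rw [Set.uIoc_of_le hab] at hs
  rw [hf s ⟨hs.1, lt_of_le_of_ne hs.2 hsb⟩]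

lemma pieceR_eq (lam x a b c : ℝ) (f : ℝ → ℝ)
    (hlam : 0 < lam) (hab : a ≤ b) (hf : ∀ s ∈ Set.Ioo a b, f s = c) :
    (∫ s in a..b, (s - x) ^ (lam - 1) * f s)
      = c * ((b - x) ^ lam - (a - x) ^ lam) / lam := by
  have hae : ∀ᵐ s, s ∈ Set.uIoc a b → (s - x) ^ (lam - 1) * f s = (s - x) ^ (lam - 1) * c := by
    filter_upwards [ae_ne' b] with s hsb hs
    rw [Set.uIoc_of_le hab] at hs
    rw [hf s ⟨hs.1, lt_of_le_of_ne hs.2 hsb⟩]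
  rw [intervalIntegral.integral_congr_ae hae, intervalIntegral.integral_mul_const,
    intervalIntegral.integral_comp_sub_right (fun u => u ^ (lam - 1)) x,
    integral_rpow (Or.inl (by linarith))]
  rw [sub_add_cancel]
  ring

/-- Diagonal entries of the stiffness matrix; in particular they do not depend
on the weight `γ`. -/
theorem stiffness_diagonal
    (lam gam b : ℝ) (hlam0 : 0 < lam) (hlam1 : lam < 1)
    (hgam : gam ∈ Set.Icc (0:ℝ) 1) (hb : 0 < b)
    (I : ℕ) (hI : 2 ≤ I) (h : ℝ) (hh : h = 1 / (I : ℝ))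
    (i : ℕ) (hi1 : 1 ≤ i) (hi2 : i ≤ I - 1) :
    stiff lam gam b h i i
      = (b * h ^ (lam - 1) / Real.Gamma (lam + 1))
        * ((2:ℝ) ^ (-lam) + 2 * (1 / 2 : ℝ) ^ lam - (3 / 2 : ℝ) ^ lam) := by
  have hIpos : (0:ℝ) < I := by positivity
  have hh0 : 0 < h := by rw [hh]; positivity
  have hp1 : (1:ℝ) ≤ (i:ℝ) := by exact_mod_cast hi1
  have hiI : i + 1 ≤ I := by omega
  have hpI : (i:ℝ) + 1 ≤ (I:ℝ) := by exact_mod_cast hiI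
  set p : ℝ := (i:ℝ) with hp
  have ha31 : (p + 1) * h ≤ 1 := by
    rw [hh]
    rw [div_eq_inv_mul, mul_one]
    calc (p + 1) * (I:ℝ)⁻¹ ≤ (I:ℝ) * (I:ℝ)⁻¹ := by
          apply mul_le_mul_of_nonneg_right hpI (by positivity)
      _ = 1 := mul_inv_cancel₀ (ne_of_gt hIpos)
  -- hatDeriv values
  have hval1 : ∀ s : ℝ, (p - 1) * h < s → s < p * h → hatDeriv h i s = 1 / h := by
    intro s h1 h2; rw [hatDeriv, if_pos ⟨h1, h2⟩]
  have hval2 : ∀ s : ℝ, p * h < s → s < (p + 1) * h → hatDeriv h i s = -1 / h := by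
    intro s h1 h2
    rw [hatDeriv, if_neg (by rintro ⟨_, h4⟩; linarith), if_pos ⟨h1, h2⟩]
  have hval0lo : ∀ s : ℝ, s < (p - 1) * h → hatDeriv h i s = 0 := by
    intro s h1
    have hkey : (p - 1) * h < p * h := by nlinarith
    rw [hatDeriv, if_neg (by rintro ⟨h3, _⟩; linarith), if_neg (by rintro ⟨h3, _⟩; linarith)]
  have hval0hi : ∀ s : ℝ, (p + 1) * h < s → hatDeriv h i s = 0 := by
    intro s h1
    have hkey : p * h < (p + 1) * h := by nlinarith
    rw [hatDeriv, if_neg (by rintro ⟨_, h4⟩; nlinarith), if_neg (by rintro ⟨_, h4⟩; linarith)]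
  -- orderings
  have o1 : (0:ℝ) ≤ (p - 1) * h := by nlinarith
  have o2 : (p - 1) * h < (p - 1/2) * h := by nlinarith
  have o3 : (p - 1/2) * h < p * h := by nlinarith
  have o4 : p * h < (p + 1/2) * h := by nlinarith
  have o5 : (p + 1/2) * h < (p + 1) * h := by nlinarith
  -- left integral at m1
  have hL1 : (∫ s in (0:ℝ)..((p - 1/2) * h), ((p - 1/2) * h - s) ^ (lam - 1) * hatDeriv h i s)
      = 0 * (((p - 1/2) * h - 0) ^ lam - ((p - 1/2) * h - (p - 1) * h) ^ lam) / lam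
        + (1/h) * (((p - 1/2) * h - (p - 1) * h) ^ lam
            - ((p - 1/2) * h - (p - 1/2) * h) ^ lam) / lam := by
    rw [← intervalIntegral.integral_add_adjacent_intervals
      (pieceL_integrable lam ((p - 1/2) * h) 0 ((p - 1) * h) 0 _ hlam0 o1
        (fun s hs => hval0lo s hs.2))
      (pieceL_integrable lam ((p - 1/2) * h) ((p - 1) * h) ((p - 1/2) * h) (1/h) _ hlam0 o2.le
        (fun s hs => hval1 s hs.1 (hs.2.trans o3)))]
    rw [pieceL_eq lam ((p - 1/2) * h) 0 ((p - 1) * h) 0 _ hlam0 o1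
        (fun s hs => hval0lo s hs.2),
      pieceL_eq lam ((p - 1/2) * h) ((p - 1) * h) ((p - 1/2) * h) (1/h) _ hlam0 o2.le
        (fun s hs => hval1 s hs.1 (hs.2.trans o3))]
  -- left integral at m2
  have hL2 : (∫ s in (0:ℝ)..((p + 1/2) * h), ((p + 1/2) * h - s) ^ (lam - 1) * hatDeriv h i s)
      = 0 * (((p + 1/2) * h - 0) ^ lam - ((p + 1/2) * h - (p - 1) * h) ^ lam) / lam
        + ((1/h) * (((p + 1/2) * h - (p - 1) * h) ^ lam - ((p + 1/2) * h - p * h) ^ lam) / lam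
          + (-1/h) * (((p + 1/2) * h - p * h) ^ lam
              - ((p + 1/2) * h - (p + 1/2) * h) ^ lam) / lam) := by
    rw [← intervalIntegral.integral_add_adjacent_intervals (b := (p - 1) * h)
      (pieceL_integrable lam ((p + 1/2) * h) 0 ((p - 1) * h) 0 _ hlam0 o1
        (fun s hs => hval0lo s hs.2))
      (((pieceL_integrable lam ((p + 1/2) * h) ((p - 1) * h) (p * h) (1/h) _ hlam0
          (o2.trans o3).le (fun s hs => hval1 s hs.1 hs.2)).trans
        (pieceL_integrable lam ((p + 1/2) * h) (p * h) ((p + 1/2) * h) (-1/h) _ hlam0 o4.le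
          (fun s hs => hval2 s hs.1 (hs.2.trans o5)))))]
    rw [← intervalIntegral.integral_add_adjacent_intervals (b := p * h)
      (pieceL_integrable lam ((p + 1/2) * h) ((p - 1) * h) (p * h) (1/h) _ hlam0
        (o2.trans o3).le (fun s hs => hval1 s hs.1 hs.2))
      (pieceL_integrable lam ((p + 1/2) * h) (p * h) ((p + 1/2) * h) (-1/h) _ hlam0 o4.le
        (fun s hs => hval2 s hs.1 (hs.2.trans o5)))]
    rw [pieceL_eq lam ((p + 1/2) * h) 0 ((p - 1) * h) 0 _ hlam0 o1
        (fun s hs => hval0lo s hs.2),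
      pieceL_eq lam ((p + 1/2) * h) ((p - 1) * h) (p * h) (1/h) _ hlam0
        (o2.trans o3).le (fun s hs => hval1 s hs.1 hs.2),
      pieceL_eq lam ((p + 1/2) * h) (p * h) ((p + 1/2) * h) (-1/h) _ hlam0 o4.le
        (fun s hs => hval2 s hs.1 (hs.2.trans o5))]
  -- right integral at m1
  have hR1 : (∫ s in ((p - 1/2) * h)..(1:ℝ), (s - (p - 1/2) * h) ^ (lam - 1) * hatDeriv h i s)
      = ((1/h) * ((p * h - (p - 1/2) * h) ^ lam
            - ((p - 1/2) * h - (p - 1/2) * h) ^ lam) / lam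
          + (-1/h) * (((p + 1) * h - (p - 1/2) * h) ^ lam
              - (p * h - (p - 1/2) * h) ^ lam) / lam)
        + 0 * ((1 - (p - 1/2) * h) ^ lam - ((p + 1) * h - (p - 1/2) * h) ^ lam) / lam := by
    rw [← intervalIntegral.integral_add_adjacent_intervals (b := (p + 1) * h)
      (((pieceR_integrable lam ((p - 1/2) * h) ((p - 1/2) * h) (p * h) (1/h) _ hlam0 o3.le
          (fun s hs => hval1 s (o2.trans hs.1) hs.2)).trans
        (pieceR_integrable lam ((p - 1/2) * h) (p * h) ((p + 1) * h) (-1/h) _ hlam0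
          (o4.trans o5).le (fun s hs => hval2 s hs.1 hs.2))))
      (pieceR_integrable lam ((p - 1/2) * h) ((p + 1) * h) 1 0 _ hlam0 ha31
        (fun s hs => hval0hi s hs.1))]
    rw [← intervalIntegral.integral_add_adjacent_intervals (b := p * h)
      (pieceR_integrable lam ((p - 1/2) * h) ((p - 1/2) * h) (p * h) (1/h) _ hlam0 o3.le
        (fun s hs => hval1 s (o2.trans hs.1) hs.2))
      (pieceR_integrable lam ((p - 1/2) * h) (p * h) ((p + 1) * h) (-1/h) _ hlam0
        (o4.trans o5).le (fun s hs => hval2 s hs.1 hs.2))]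
    rw [pieceR_eq lam ((p - 1/2) * h) ((p - 1/2) * h) (p * h) (1/h) _ hlam0 o3.le
        (fun s hs => hval1 s (o2.trans hs.1) hs.2),
      pieceR_eq lam ((p - 1/2) * h) (p * h) ((p + 1) * h) (-1/h) _ hlam0
        (o4.trans o5).le (fun s hs => hval2 s hs.1 hs.2),
      pieceR_eq lam ((p - 1/2) * h) ((p + 1) * h) 1 0 _ hlam0 ha31
        (fun s hs => hval0hi s hs.1)]
  -- right integral at m2
  have hR2 : (∫ s in ((p + 1/2) * h)..(1:ℝ), (s - (p + 1/2) * h) ^ (lam - 1) * hatDeriv h i s)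
      = (-1/h) * (((p + 1) * h - (p + 1/2) * h) ^ lam
            - ((p + 1/2) * h - (p + 1/2) * h) ^ lam) / lam
        + 0 * ((1 - (p + 1/2) * h) ^ lam - ((p + 1) * h - (p + 1/2) * h) ^ lam) / lam := by
    rw [← intervalIntegral.integral_add_adjacent_intervals (b := (p + 1) * h)
      (pieceR_integrable lam ((p + 1/2) * h) ((p + 1/2) * h) ((p + 1) * h) (-1/h) _ hlam0 o5.le
        (fun s hs => hval2 s (o4.trans hs.1) hs.2))
      (pieceR_integrable lam ((p + 1/2) * h) ((p + 1) * h) 1 0 _ hlam0 ha31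
        (fun s hs => hval0hi s hs.1))]
    rw [pieceR_eq lam ((p + 1/2) * h) ((p + 1/2) * h) ((p + 1) * h) (-1/h) _ hlam0 o5.le
        (fun s hs => hval2 s (o4.trans hs.1) hs.2),
      pieceR_eq lam ((p + 1/2) * h) ((p + 1) * h) 1 0 _ hlam0 ha31
        (fun s hs => hval0hi s hs.1)]
  -- assemble
  rw [stiff, leftFracInt, leftFracInt, rightFracInt, rightFracInt, hL1, hL2, hR1, hR2]
  -- simplify bases
  rw [show ((p - 1/2) * h - (p - 1) * h : ℝ) = h/2 by ring,
    show ((p - 1/2) * h - (p - 1/2) * h : ℝ) = 0 by ring,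
    show ((p + 1/2) * h - (p - 1) * h : ℝ) = 3*h/2 by ring,
    show ((p + 1/2) * h - p * h : ℝ) = h/2 by ring,
    show ((p + 1/2) * h - (p + 1/2) * h : ℝ) = 0 by ring,
    show (p * h - (p - 1/2) * h : ℝ) = h/2 by ring,
    show ((p + 1) * h - (p - 1/2) * h : ℝ) = 3*h/2 by ring,
    show ((p + 1) * h - (p + 1/2) * h : ℝ) = h/2 by ring,
    Real.zero_rpow (ne_of_gt hlam0)]
  have hG : Real.Gamma (lam + 1) = lam * Real.Gamma lam := Real.Gamma_add_one (ne_of_gt hlam0)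
  have hGpos : 0 < Real.Gamma lam := Real.Gamma_pos_of_pos hlam0
  have e1 : (h/2 : ℝ) ^ lam = h ^ lam * (1/2 : ℝ) ^ lam := by
    rw [show (h/2 : ℝ) = h * (1/2) by ring, Real.mul_rpow hh0.le (by norm_num)]
  have e2 : (3*h/2 : ℝ) ^ lam = h ^ lam * (3/2 : ℝ) ^ lam := by
    rw [show (3*h/2 : ℝ) = h * (3/2) by ring, Real.mul_rpow hh0.le (by norm_num)]
  have e3 : (2:ℝ) ^ (-lam) = (1/2 : ℝ) ^ lam := by
    rw [Real.rpow_neg (by norm_num), one_div, Real.inv_rpow (by norm_num)]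
  have e4 : h ^ (lam - 1) = h ^ lam / h := by
    rw [Real.rpow_sub hh0, Real.rpow_one]
  rw [e1, e2, e3, e4, hG]
  field_simp
  ring
end

section
/- With the stiffness matrix entries z_{i,j} defined via the weighted left and right fractional integrals of the hat-function derivatives, the sub-diagonal entries satisfy, for every 2 ≤ i ≤ I−1, z_{i,i−1} = ( b · h^{λ−1} / Γ(λ+1) ) · ( 3·(3/2)^λ·γ − 3·(1/2)^λ·γ − (5/2)^λ·γ − 2^{−λ}·(1−γ) ). -/
open MeasureTheory intervalIntegral Real

/-!
Off the grid points, `Dφ_j` is `1/h` times the second difference of the Heaviside steps at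
`x_{j-1}, x_j, x_{j+1}`, and the left fractional integral of the step at `a` is the truncated
power `(x - a)₊^λ / Γ(λ + 1)` (the right one, of the reversed step, is `(a - x)₊^λ / Γ(λ + 1)`).
Hence at `x = (j + τ) h` both fractional integrals of `Dφ_j` are `h^(λ-1) / Γ(λ + 1)` times
the second difference `(τ+1)₊^λ - 2 τ₊^λ + (τ-1)₊^λ`, taken at `τ` resp. `-τ`. With `j = i - 1`
the midpoints `x_{i∓1/2}` are `τ = 1/2` and `τ = 3/2`, which gives the formula.
-/

open Set

variable {lam h : ℝ}

lemma intervalIntegrable_sub_rpow (hlam : 0 < lam) (x a b : ℝ) :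
    IntervalIntegrable (fun s => (x - s) ^ (lam - 1)) volume a b := by
  simpa using ((intervalIntegrable_rpow' (a := x - b) (b := x - a) (r := lam - 1)
      (by linarith)).comp_sub_left x).symm

lemma intervalIntegrable_rpow_sub (hlam : 0 < lam) (x a b : ℝ) :
    IntervalIntegrable (fun s => (s - x) ^ (lam - 1)) volume a b := by
  simpa using (intervalIntegrable_rpow' (a := a - x) (b := b - x) (r := lam - 1)
      (by linarith)).comp_sub_right x

lemma IntervalIntegrable.indicator {f : ℝ → ℝ} {a b : ℝ}
    (hf : IntervalIntegrable f volume a b) {t : Set ℝ} (ht : MeasurableSet t) :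
    IntervalIntegrable (t.indicator f) volume a b :=
  intervalIntegrable_iff.2 ((intervalIntegrable_iff.1 hf).indicator ht)

lemma integral_indicator_Ioi_sub_rpow (hlam : 0 < lam) {u a : ℝ} (hua : u ≤ a) (x : ℝ) :
    ∫ s in u..x, (Ioi a).indicator (fun s => (x - s) ^ (lam - 1)) s
      = max (x - a) 0 ^ lam / lam := by
  have integrable := fun c d =>
    (intervalIntegrable_sub_rpow hlam x c d).indicator (measurableSet_Ioi (a := a))
  have vanish : ∀ v ≤ a,
      ∫ s in u..v, (Ioi a).indicator (fun s => (x - s) ^ (lam - 1)) s = 0 := by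
    intro v hv
    rw [integral_congr (g := fun _ => 0), intervalIntegral.integral_zero]
    intro s hs
    refine indicator_of_notMem (not_lt.2 ?_) _
    exact (mem_uIcc.1 hs).elim (fun hs' => hs'.2.trans hv) (fun hs' => hs'.2.trans hua)
  rcases le_or_gt x a with hxa | hax
  · rw [vanish x hxa, max_eq_right (by linarith), zero_rpow hlam.ne', zero_div]
  · rw [← integral_add_adjacent_intervals (integrable u a) (integrable a x), vanish a le_rfl,
      zero_add, intervalIntegral.integral_congr_ae (g := fun s => (x - s) ^ (lam - 1)),
      integral_comp_sub_left (fun s => s ^ (lam - 1)), integral_rpow (Or.inl (by linarith)),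
      max_eq_left (by linarith)]
    · simp [zero_rpow hlam.ne']
    · refine Filter.Eventually.of_forall fun s hs => indicator_of_mem ?_ _
      exact (uIoc_of_le hax.le ▸ hs).1

lemma integral_indicator_Iio_rpow_sub (hlam : 0 < lam) {a v : ℝ} (hav : a ≤ v) (x : ℝ) :
    ∫ s in x..v, (Iio a).indicator (fun s => (s - x) ^ (lam - 1)) s
      = max (a - x) 0 ^ lam / lam := by
  have reflect : ∀ s, (Iio a).indicator (fun s => (s - x) ^ (lam - 1)) (-s)
      = (Ioi (-a)).indicator (fun s => (-x - s) ^ (lam - 1)) s := fun s => by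
    simp only [indicator, mem_Iio, mem_Ioi, neg_lt, neg_sub_comm]
  have := integral_comp_neg (a := -v) (b := -x)
    (fun s => (Iio a).indicator (fun s => (s - x) ^ (lam - 1)) s)
  simp only [neg_neg, reflect] at this
  rw [← this, integral_indicator_Ioi_sub_rpow hlam (neg_le_neg hav), neg_sub_neg]

lemma hatDeriv_mul_ae_eq_indicator_Ioi (hh : 0 < h) (j : ℕ) (g : ℝ → ℝ) :
    (fun s => g s * hatDeriv h j s) =ᵐ[volume] fun s => (1 / h) *
      ((Ioi ((j - 1) * h)).indicator g s - 2 * (Ioi (j * h)).indicator g s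
        + (Ioi ((j + 1) * h)).indicator g s) := by
  filter_upwards [volume.ae_ne (((j : ℝ) - 1) * h), volume.ae_ne ((j : ℝ) * h),
    volume.ae_ne (((j : ℝ) + 1) * h)] with s ha hb hc
  simp only [hatDeriv, indicator, mem_Ioi]
  grind

lemma hatDeriv_mul_ae_eq_indicator_Iio (hh : 0 < h) (j : ℕ) (g : ℝ → ℝ) :
    (fun s => g s * hatDeriv h j s) =ᵐ[volume] fun s => -(1 / h) *
      ((Iio ((j - 1) * h)).indicator g s - 2 * (Iio (j * h)).indicator g s
        + (Iio ((j + 1) * h)).indicator g s) := by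
  filter_upwards [volume.ae_ne (((j : ℝ) - 1) * h), volume.ae_ne ((j : ℝ) * h),
    volume.ae_ne (((j : ℝ) + 1) * h)] with s ha hb hc
  simp only [hatDeriv, indicator, mem_Iio]
  grind

noncomputable def truncPowSecondDiff (lam τ : ℝ) : ℝ :=
  max (τ + 1) 0 ^ lam - 2 * max τ 0 ^ lam + max (τ - 1) 0 ^ lam

lemma max_mul_rpow (hh : 0 < h) (σ : ℝ) : max (σ * h) 0 ^ lam = max σ 0 ^ lam * h ^ lam := by
  rw [← mul_rpow (le_max_right _ _) hh.le, max_mul_of_nonneg _ _ hh.le, zero_mul]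

lemma leftFracInt_hatDeriv (hlam : 0 < lam) (hh : 0 < h) {j : ℕ} (hj : 1 ≤ j) (τ : ℝ) :
    leftFracInt lam (hatDeriv h j) ((j + τ) * h)
      = h ^ (lam - 1) / Gamma (lam + 1) * truncPowSecondDiff lam τ := by
  set x := ((j : ℝ) + τ) * h
  have integrable := fun c : ℝ =>
    (intervalIntegrable_sub_rpow hlam x 0 x).indicator (measurableSet_Ioi (a := c))
  have hstart : (0 : ℝ) ≤ (j - 1) * h := mul_nonneg (by simp [hj]) hh.le
  unfold leftFracInt
  rw [integral_congr_ae ((hatDeriv_mul_ae_eq_indicator_Ioi hh j _).mono fun s hs _ => hs),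
    intervalIntegral.integral_const_mul,
    integral_add ((integrable _).sub ((integrable _).const_mul 2)) (integrable _),
    integral_sub (integrable _) ((integrable _).const_mul 2), intervalIntegral.integral_const_mul,
    integral_indicator_Ioi_sub_rpow hlam hstart,
    integral_indicator_Ioi_sub_rpow hlam (by positivity),
    integral_indicator_Ioi_sub_rpow hlam (by positivity),
    show x - (j - 1) * h = (τ + 1) * h by ring, show x - j * h = τ * h by ring,
    show x - (j + 1) * h = (τ - 1) * h by ring, max_mul_rpow hh, max_mul_rpow hh, max_mul_rpow hh,
    rpow_sub_one hh.ne', Gamma_add_one hlam.ne', truncPowSecondDiff]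
  field_simp

lemma rightFracInt_hatDeriv (hlam : 0 < lam) (hh : 0 < h) {j : ℕ} (hj : ((j : ℝ) + 1) * h ≤ 1)
    (τ : ℝ) : rightFracInt lam (hatDeriv h j) ((j + τ) * h)
      = -(h ^ (lam - 1) / Gamma (lam + 1) * truncPowSecondDiff lam (-τ)) := by
  set x := ((j : ℝ) + τ) * h
  have integrable := fun c : ℝ =>
    (intervalIntegrable_rpow_sub hlam x x 1).indicator (measurableSet_Iio (a := c))
  unfold rightFracInt
  rw [integral_congr_ae ((hatDeriv_mul_ae_eq_indicator_Iio hh j _).mono fun s hs _ => hs),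
    intervalIntegral.integral_const_mul,
    integral_add ((integrable _).sub ((integrable _).const_mul 2)) (integrable _),
    integral_sub (integrable _) ((integrable _).const_mul 2), intervalIntegral.integral_const_mul,
    integral_indicator_Iio_rpow_sub hlam (by linarith),
    integral_indicator_Iio_rpow_sub hlam (by linarith), integral_indicator_Iio_rpow_sub hlam hj,
    show (j - 1) * h - x = (-τ - 1) * h by ring, show j * h - x = -τ * h by ring,
    show (j + 1) * h - x = (-τ + 1) * h by ring, max_mul_rpow hh, max_mul_rpow hh, max_mul_rpow hh,
    rpow_sub_one hh.ne', Gamma_add_one hlam.ne', truncPowSecondDiff]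
  field_simp
  ring

theorem stiffness_subdiagonal_general
    (lam gam b : ℝ) (hlam0 : 0 < lam)
    (I : ℕ) (h : ℝ) (hh : h = 1 / (I : ℝ))
    (i : ℕ) (hi1 : 2 ≤ i) (hi2 : i ≤ I - 1) :
    stiff lam gam b h i (i - 1)
      = (b * h ^ (lam - 1) / Real.Gamma (lam + 1))
        * (3 * (3 / 2 : ℝ) ^ lam * gam - 3 * (1 / 2 : ℝ) ^ lam * gam
            - (5 / 2 : ℝ) ^ lam * gam - (2:ℝ) ^ (-lam) * (1 - gam)) := by
  have hI : (0 : ℝ) < I := Nat.cast_pos.2 (by omega)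
  have hh0 : 0 < h := hh ▸ by positivity
  have hj : ((i - 1 : ℕ) : ℝ) = i - 1 := by rw [Nat.cast_sub (by omega), Nat.cast_one]
  have hjI : (((i - 1 : ℕ) : ℝ) + 1) * h ≤ 1 := by
    rw [hj, sub_add_cancel, hh, mul_one_div, div_le_one hI]
    exact_mod_cast (by omega : i ≤ I)
  have hleft : ((i : ℝ) - 1 / 2) * h = ((i - 1 : ℕ) + 1 / 2) * h := by rw [hj]; ring
  have hright : ((i : ℝ) + 1 / 2) * h = ((i - 1 : ℕ) + 3 / 2) * h := by rw [hj]; ring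
  unfold stiff
  rw [hleft, hright, leftFracInt_hatDeriv hlam0 hh0 (by omega),
    leftFracInt_hatDeriv hlam0 hh0 (by omega), rightFracInt_hatDeriv hlam0 hh0 hjI,
    rightFracInt_hatDeriv hlam0 hh0 hjI]
  have two_rpow_neg : (2 : ℝ) ^ (-lam) = (1 / 2) ^ lam := by
    rw [one_div, inv_rpow zero_le_two, rpow_neg zero_le_two]
  simp only [truncPowSecondDiff, two_rpow_neg]
  norm_num [zero_rpow hlam0.ne']
  field_simp
  ring

/-- Sub-diagonal entries of the stiffness matrix. -/
theorem stiffness_subdiagonal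
    (lam gam b : ℝ) (hlam0 : 0 < lam) (hlam1 : lam < 1)
    (hgam : gam ∈ Set.Icc (0:ℝ) 1) (hb : 0 < b)
    (I : ℕ) (hI : 2 ≤ I) (h : ℝ) (hh : h = 1 / (I : ℝ))
    (i : ℕ) (hi1 : 2 ≤ i) (hi2 : i ≤ I - 1) :
    stiff lam gam b h i (i - 1)
      = (b * h ^ (lam - 1) / Real.Gamma (lam + 1))
        * (3 * (3 / 2 : ℝ) ^ lam * gam - 3 * (1 / 2 : ℝ) ^ lam * gam
            - (5 / 2 : ℝ) ^ lam * gam - (2:ℝ) ^ (-lam) * (1 - gam)) :=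
  stiffness_subdiagonal_general lam gam b hlam0 I h hh i hi1 hi2
end

section
/- With the stiffness matrix entries z_{i,j} defined via the weighted left and right fractional integrals of the hat-function derivatives, the super-diagonal entries satisfy, for every 1 ≤ i ≤ I−2, z_{i,i+1} = ( b · h^{λ−1} / Γ(λ+1) ) · ( 3·(3/2)^λ·(1−γ) − 3·(1/2)^λ·(1−γ) − (5/2)^λ·(1−γ) − 2^{−λ}·γ ). -/
open MeasureTheory intervalIntegral Real

/-!
On its support `Dφ_j` is `1/h` on the cell left of `x_j` and `-1/h` on the cell right of it, so
each fractional integral of it reduces to integrals of the kernel `|x - s|^(λ-1)` over grid cells,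
which are explicit differences of `λ`-th powers divided by `λ`. At the midpoints `x_{i±1/2}` all
distances to the nodes of `φ_{i+1}` are `h/2, 3h/2, 5h/2`, so each value is
`h^(λ-1) / Γ(λ+1)` times a combination of `(1/2)^λ, (3/2)^λ, (5/2)^λ`; the left integral at
`x_{i-1/2}` vanishes because the support of `Dφ_{i+1}` lies to its right.
-/

open Set

section Kernel

variable {lam : ℝ}

theorem intervalIntegrable_sub_const_rpow_sub_one (hlam : 0 < lam) (c a b : ℝ) :
    IntervalIntegrable (fun s => (s - c) ^ (lam - 1)) volume a b := by
  simpa using (intervalIntegrable_rpow' (a := a - c) (b := b - c)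
    (by linarith : (-1 : ℝ) < lam - 1)).comp_sub_right c

theorem intervalIntegrable_const_sub_rpow_sub_one (hlam : 0 < lam) (c a b : ℝ) :
    IntervalIntegrable (fun s => (c - s) ^ (lam - 1)) volume a b := by
  simpa using (intervalIntegrable_rpow' (a := c - a) (b := c - b)
    (by linarith : (-1 : ℝ) < lam - 1)).comp_sub_left c

theorem integral_sub_const_rpow_sub_one (hlam : 0 < lam) (c a b : ℝ) :
    ∫ s in a..b, (s - c) ^ (lam - 1) = ((b - c) ^ lam - (a - c) ^ lam) / lam := by
  rw [integral_comp_sub_right (fun u => u ^ (lam - 1)) c,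
    integral_rpow (Or.inl (by linarith)), sub_add_cancel]

theorem integral_const_sub_rpow_sub_one (hlam : 0 < lam) (c a b : ℝ) :
    ∫ s in a..b, (c - s) ^ (lam - 1) = ((c - a) ^ lam - (c - b) ^ lam) / lam := by
  rw [integral_comp_sub_left (fun u => u ^ (lam - 1)) c,
    integral_rpow (Or.inl (by linarith)), sub_add_cancel]

end Kernel

theorem intervalIntegral.integral_mul_of_eqOn_Ioo {F g : ℝ → ℝ} {a b k : ℝ} (hab : a ≤ b)
    (hg : EqOn g (fun _ => k) (Ioo a b)) :
    ∫ s in a..b, F s * g s = k * ∫ s in a..b, F s := by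
  rw [integral_congr_Ioo_of_le hab fun s hs => congrArg (F s * ·) (hg hs), integral_mul_const,
    mul_comm]

section HatDeriv

variable {h : ℝ} {j : ℕ}

theorem hatDeriv_eqOn_Ioo_left : EqOn (hatDeriv h j) (fun _ => 1 / h) (Ioo ((j - 1) * h) (j * h)) :=
  fun _ hs => if_pos hs

theorem hatDeriv_eqOn_Ioo_right :
    EqOn (hatDeriv h j) (fun _ => -1 / h) (Ioo (j * h) ((j + 1) * h)) :=
  fun _ hs => by rw [hatDeriv, if_neg fun hs' => hs'.2.not_gt hs.1, if_pos (show _ ∧ _ from hs)]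

theorem hatDeriv_eqOn_Iio (hh : 0 ≤ h) : EqOn (hatDeriv h j) (fun _ => 0) (Iio ((j - 1) * h)) := by
  intro s hs
  have : (j - 1) * h ≤ j * h := by nlinarith
  rw [hatDeriv, if_neg fun hs' => hs'.1.not_gt hs, if_neg fun hs' => (hs.trans_le this).not_gt hs'.1]

theorem hatDeriv_eqOn_Ioi (hh : 0 ≤ h) : EqOn (hatDeriv h j) (fun _ => 0) (Ioi ((j + 1) * h)) := by
  intro s hs
  have : j * h ≤ (j + 1) * h := by nlinarith
  rw [hatDeriv, if_neg fun hs' => (this.trans_lt hs).not_gt hs'.2, if_neg fun hs' => hs'.2.not_gt hs]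

theorem IntervalIntegrable.mul_hatDeriv {F : ℝ → ℝ} {a b : ℝ}
    (hF : IntervalIntegrable F volume a b) (h : ℝ) (j : ℕ) :
    IntervalIntegrable (fun s => F s * hatDeriv h j s) volume a b := by
  have hmeas : Measurable (hatDeriv h j) :=
    Measurable.ite measurableSet_Ioo measurable_const
      (.ite measurableSet_Ioo measurable_const measurable_const)
  have hbound : ∀ s, ‖hatDeriv h j s‖ ≤ |h|⁻¹ := by
    intro s; unfold hatDeriv; split_ifs <;> simp
  rw [intervalIntegrable_iff] at hF ⊢
  exact hF.mul_bdd hmeas.aestronglyMeasurable (ae_of_all _ hbound)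


variable {F : ℝ → ℝ} {x : ℝ}

theorem integral_mul_hatDeriv_eq_zero (hh : 0 ≤ h) (hx₀ : 0 ≤ x) (hx : x ≤ (j - 1) * h) :
    ∫ s in 0..x, F s * hatDeriv h j s = 0 := by
  rw [integral_mul_of_eqOn_Ioo hx₀ ((hatDeriv_eqOn_Iio hh).mono fun s hs => hs.2.trans_le hx),
    zero_mul]

theorem integral_mul_hatDeriv_of_mem_Icc_left (hF : ∀ a b, IntervalIntegrable F volume a b)
    (hh : 0 ≤ h) (hj : 0 ≤ (j - 1) * h) (hx : x ∈ Icc ((j - 1) * h) (j * h)) :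
    ∫ s in 0..x, F s * hatDeriv h j s = 1 / h * ∫ s in (j - 1) * h..x, F s := by
  rw [← integral_add_adjacent_intervals ((hF _ _).mul_hatDeriv h j) ((hF _ _).mul_hatDeriv h j),
    integral_mul_hatDeriv_eq_zero hh hj le_rfl,
    integral_mul_of_eqOn_Ioo hx.1 (hatDeriv_eqOn_Ioo_left.mono (Ioo_subset_Ioo_right hx.2)),
    zero_add]

theorem integral_mul_hatDeriv_to_one_of_mem_Icc (hF : ∀ a b, IntervalIntegrable F volume a b)
    (hh : 0 ≤ h) (hj : (j + 1) * h ≤ 1) (hx : x ∈ Icc ((j - 1) * h) (j * h)) :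
    ∫ s in x..1, F s * hatDeriv h j s
      = 1 / h * (∫ s in x..j * h, F s) + -1 / h * ∫ s in j * h..(j + 1) * h, F s := by
  have hF' a b := (hF a b).mul_hatDeriv h j
  rw [← integral_add_adjacent_intervals (hF' x (j * h)) (hF' _ 1),
    ← integral_add_adjacent_intervals (hF' _ ((j + 1) * h)) (hF' _ 1),
    integral_mul_of_eqOn_Ioo hx.2 (hatDeriv_eqOn_Ioo_left.mono (Ioo_subset_Ioo_left hx.1)),
    integral_mul_of_eqOn_Ioo (by nlinarith) hatDeriv_eqOn_Ioo_right,
    integral_mul_of_eqOn_Ioo hj ((hatDeriv_eqOn_Ioi hh).mono Ioo_subset_Ioi_self),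
    zero_mul, add_zero]

theorem integral_mul_hatDeriv_to_one_of_le (hF : ∀ a b, IntervalIntegrable F volume a b)
    (hh : 0 ≤ h) (hj : (j + 1) * h ≤ 1) (hx : x ≤ (j - 1) * h) :
    ∫ s in x..1, F s * hatDeriv h j s
      = 1 / h * (∫ s in (j - 1) * h..j * h, F s) + -1 / h * ∫ s in j * h..(j + 1) * h, F s := by
  rw [← integral_add_adjacent_intervals ((hF _ _).mul_hatDeriv h j) ((hF _ _).mul_hatDeriv h j),
    integral_mul_of_eqOn_Ioo hx ((hatDeriv_eqOn_Iio hh).mono Ioo_subset_Iio_self), zero_mul,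
    zero_add, integral_mul_hatDeriv_to_one_of_mem_Icc hF hh hj ⟨le_rfl, by nlinarith⟩]

end HatDeriv

section FracInt

variable {lam h t : ℝ} {j : ℕ}

theorem leftFracInt_hatDeriv_eq_zero (hh : 0 ≤ h) {x : ℝ} (hx₀ : 0 ≤ x) (hx : x ≤ (j - 1) * h) :
    leftFracInt lam (hatDeriv h j) x = 0 := by
  rw [leftFracInt, integral_mul_hatDeriv_eq_zero hh hx₀ hx, mul_zero]

theorem leftFracInt_hatDeriv_of_mem_Icc (hlam : 0 < lam) (hh : 0 < h) (hj : 1 ≤ j)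
    (ht : t ∈ Icc (0 : ℝ) 1) :
    leftFracInt lam (hatDeriv h j) ((j - 1 + t) * h)
      = h ^ (lam - 1) / Gamma (lam + 1) * t ^ lam := by
  have hj' : (1 : ℝ) ≤ j := by exact_mod_cast hj
  rw [leftFracInt, integral_mul_hatDeriv_of_mem_Icc_left
      (intervalIntegrable_const_sub_rpow_sub_one hlam _) hh.le (by nlinarith)
      ⟨by nlinarith [ht.1], by nlinarith [ht.2]⟩,
    integral_const_sub_rpow_sub_one hlam, sub_self, zero_rpow hlam.ne', sub_zero,
    show (j - 1 + t) * h - (j - 1) * h = t * h by ring, mul_rpow ht.1 hh.le,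
    rpow_sub_one hh.ne', Gamma_add_one hlam.ne']
  field_simp

theorem rightFracInt_hatDeriv_of_mem_Icc (hlam : 0 < lam) (hh : 0 < h) (hj : (j + 1) * h ≤ 1)
    (ht : t ∈ Icc (0 : ℝ) 1) :
    rightFracInt lam (hatDeriv h j) ((j - 1 + t) * h)
      = h ^ (lam - 1) / Gamma (lam + 1) * (2 * (1 - t) ^ lam - (2 - t) ^ lam) := by
  rw [rightFracInt, integral_mul_hatDeriv_to_one_of_mem_Icc
      (intervalIntegrable_sub_const_rpow_sub_one hlam _) hh.le hj
      ⟨by nlinarith [ht.1], by nlinarith [ht.2]⟩,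
    integral_sub_const_rpow_sub_one hlam, integral_sub_const_rpow_sub_one hlam, sub_self,
    zero_rpow hlam.ne', sub_zero,
    show j * h - (j - 1 + t) * h = (1 - t) * h by ring,
    show (j + 1) * h - (j - 1 + t) * h = (2 - t) * h by ring,
    mul_rpow (by linarith [ht.2]) hh.le, mul_rpow (by linarith [ht.2]) hh.le,
    rpow_sub_one hh.ne', Gamma_add_one hlam.ne']
  field_simp
  ring

theorem rightFracInt_hatDeriv_of_le (hlam : 0 < lam) (hh : 0 < h) (hj : (j + 1) * h ≤ 1)
    (ht : 0 ≤ t) :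
    rightFracInt lam (hatDeriv h j) ((j - 1 - t) * h)
      = h ^ (lam - 1) / Gamma (lam + 1) * (2 * (1 + t) ^ lam - t ^ lam - (2 + t) ^ lam) := by
  rw [rightFracInt, integral_mul_hatDeriv_to_one_of_le
      (intervalIntegrable_sub_const_rpow_sub_one hlam _) hh.le hj (by nlinarith),
    integral_sub_const_rpow_sub_one hlam, integral_sub_const_rpow_sub_one hlam,
    show (j - 1) * h - (j - 1 - t) * h = t * h by ring,
    show j * h - (j - 1 - t) * h = (1 + t) * h by ring,
    show (j + 1) * h - (j - 1 - t) * h = (2 + t) * h by ring,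
    mul_rpow ht hh.le, mul_rpow (by linarith) hh.le, mul_rpow (by linarith) hh.le,
    rpow_sub_one hh.ne', Gamma_add_one hlam.ne']
  field_simp
  ring

end FracInt

theorem stiffness_superdiagonal_general
    (lam gam b : ℝ) (hlam0 : 0 < lam)
    (I : ℕ) (h : ℝ) (hh : h = 1 / (I : ℝ))
    (i : ℕ) (hi1 : 1 ≤ i) (hi2 : i ≤ I - 2) :
    stiff lam gam b h i (i + 1)
      = (b * h ^ (lam - 1) / Real.Gamma (lam + 1))
        * (3 * (3 / 2 : ℝ) ^ lam * (1 - gam) - 3 * (1 / 2 : ℝ) ^ lam * (1 - gam)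
            - (5 / 2 : ℝ) ^ lam * (1 - gam) - (2:ℝ) ^ (-lam) * gam) := by
  have hi : (1 : ℝ) ≤ i := by exact_mod_cast hi1
  have hiI : (i : ℝ) + 2 ≤ I := by exact_mod_cast (by omega : i + 2 ≤ I)
  have hI : (0 : ℝ) < I := by linarith
  have hh₀ : 0 < h := hh ▸ one_div_pos.mpr hI
  have hfit : (((i + 1 : ℕ) : ℝ) + 1) * h ≤ 1 := by
    rw [hh, mul_one_div, div_le_one hI]; push_cast; linarith
  have hx₁ : ((i : ℝ) - 1 / 2) * h = (((i + 1 : ℕ) : ℝ) - 1 - 1 / 2) * h := by push_cast; ring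
  have hx₂ : ((i : ℝ) + 1 / 2) * h = (((i + 1 : ℕ) : ℝ) - 1 + 1 / 2) * h := by push_cast; ring
  have hhalf : (1 / 2 : ℝ) ∈ Icc 0 1 := by norm_num
  rw [stiff, hx₁, hx₂, leftFracInt_hatDeriv_eq_zero hh₀.le (by push_cast; nlinarith) (by nlinarith),
    leftFracInt_hatDeriv_of_mem_Icc hlam0 hh₀ (by omega) hhalf,
    rightFracInt_hatDeriv_of_le hlam0 hh₀ hfit (by norm_num),
    rightFracInt_hatDeriv_of_mem_Icc hlam0 hh₀ hfit hhalf,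
    rpow_neg zero_le_two, ← inv_rpow zero_le_two]
  norm_num
  ring

/-- Super-diagonal entries of the stiffness matrix. -/
theorem stiffness_superdiagonal
    (lam gam b : ℝ) (hlam0 : 0 < lam) (hlam1 : lam < 1)
    (hgam : gam ∈ Set.Icc (0:ℝ) 1) (hb : 0 < b)
    (I : ℕ) (hI : 3 ≤ I) (h : ℝ) (hh : h = 1 / (I : ℝ))
    (i : ℕ) (hi1 : 1 ≤ i) (hi2 : i ≤ I - 2) :
    stiff lam gam b h i (i + 1)
      = (b * h ^ (lam - 1) / Real.Gamma (lam + 1))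
        * (3 * (3 / 2 : ℝ) ^ lam * (1 - gam) - 3 * (1 / 2 : ℝ) ^ lam * (1 - gam)
            - (5 / 2 : ℝ) ^ lam * (1 - gam) - (2:ℝ) ^ (-lam) * gam) :=
  stiffness_superdiagonal_general lam gam b hlam0 I h hh i hi1 hi2
end
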